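/- arXiv:2401.11363 — 12 statements merged into one kernel-verified Lean document; each statement's English description precedes it below -/
import Mathlib

section
/- Let k be a field and R a unital k-algebra. Suppose a k-linear operator P : R → R is not a scalar multiple of the identity map and that P is an extended Rota-Baxter operator of weight (λ₁, κ₁) and also of weight (λ₂, κ₂). Then (λ₁, κ₁) = (λ₂, κ₂); that is, the weight of a non-scalar extended Rota-Baxter operator on a unital algebra over a field is unique. -/
/-- A `k`-linear operator `P` on a `k`-algebra `R` is an extended Rota-Baxter operator of
weight `(lam, kap)` if `P x * P y = P (x * P y) + P (P x * y) + lam • P (x*y) + kap • (x*y)`. -/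
def IsExtRB {k : Type*} [CommRing k] {R : Type*} [Ring R] [Algebra k R]
    (lam kap : k) (P : R →ₗ[k] R) : Prop :=
  ∀ x y : R, P x * P y = P (x * P y) + P (P x * y) + lam • P (x * y) + kap • (x * y)

/-- Over a field, the weight of a non-scalar extended Rota-Baxter operator on a unital
algebra is unique. -/
theorem stmt1 {k : Type*} [Field k] {R : Type*} [Ring R] [Algebra k R]
    (P : R →ₗ[k] R) (hP : ∀ c : k, P ≠ c • (LinearMap.id : R →ₗ[k] R))
    (lam1 kap1 lam2 kap2 : k)
    (h1 : IsExtRB lam1 kap1 P) (h2 : IsExtRB lam2 kap2 P) :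
    lam1 = lam2 ∧ kap1 = kap2 := by
  have key : ∀ z : R, lam1 • P z + kap1 • z = lam2 • P z + kap2 • z := by
    intro z
    have e1 := h1 z 1
    have e2 := h2 z 1
    rw [mul_one] at e1 e2
    have e := e1.symm.trans e2
    have e' := add_left_cancel (show (P (z * P 1) + P (P z)) +
        (lam1 • P (z * 1) + kap1 • (z * 1)) = (P (z * P 1) + P (P z)) +
        (lam2 • P (z * 1) + kap2 • (z * 1)) by
      rw [← add_assoc, ← add_assoc]; exact e)
    simpa using e'
  have hR : Nontrivial R := by
    by_contra h
    have : Subsingleton R := not_nontrivial_iff_subsingleton.mp h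
    exact hP 0 (by ext x; exact Subsingleton.elim _ _)
  by_cases hδ : lam1 = lam2
  · refine ⟨hδ, ?_⟩
    subst hδ
    have h1' := add_left_cancel (key 1)
    have : (algebraMap k R) kap1 = (algebraMap k R) kap2 := by
      rw [Algebra.algebraMap_eq_smul_one, Algebra.algebraMap_eq_smul_one]; exact h1'
    exact (algebraMap k R).injective this
  · exfalso
    apply hP ((kap2 - kap1) / (lam1 - lam2))
    ext z
    have hk := key z
    have hδ' : lam1 - lam2 ≠ 0 := sub_ne_zero.mpr hδ
    have : (lam1 - lam2) • P z = (kap2 - kap1) • z := by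
      rw [sub_smul, sub_smul]
      rw [sub_eq_sub_iff_add_eq_add, hk, add_comm]
    have := congrArg (fun w => (lam1 - lam2)⁻¹ • w) this
    simp only [smul_smul, inv_mul_cancel₀ hδ', one_smul] at this
    simp [this, div_eq_inv_mul, mul_smul, mul_comm]
end

section
/- Let k be a commutative ring, R a k-algebra, P : R → R a k-linear operator, and λ, κ ∈ k. Define the adjoint operator P̃ := -λ·id_R - P. Then P is an extended Rota-Baxter operator of weight (λ, κ) if and only if P̃ is an extended Rota-Baxter operator of weight (λ, κ). -/
theorem aux3 {k : Type*} [CommRing k] {R : Type*} [Ring R] [Algebra k R]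
    (P : R →ₗ[k] R) (lam kap : k) (h : IsExtRB lam kap P) :
    IsExtRB lam kap (-(lam • (LinearMap.id : R →ₗ[k] R)) - P) := by
  intro x y
  have key := h x y
  simp only [LinearMap.sub_apply, LinearMap.neg_apply, LinearMap.smul_apply, LinearMap.id_coe,
    id_eq, map_sub, map_neg, map_smul, neg_sub, sub_mul, mul_sub, neg_mul, mul_neg,
    smul_mul_assoc, mul_smul_comm, smul_sub, smul_neg, smul_smul]
  rw [key]
  abel

/-- `P` is an extended Rota-Baxter operator of weight `(lam, kap)` iff its adjoint
`P̃ = -lam • id - P` is one. -/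
theorem stmt3 {k : Type*} [CommRing k] {R : Type*} [Ring R] [Algebra k R]
    (P : R →ₗ[k] R) (lam kap : k) :
    IsExtRB lam kap P ↔
      IsExtRB lam kap (-(lam • (LinearMap.id : R →ₗ[k] R)) - P) := by
  constructor
  · exact aux3 P lam kap
  · intro h
    have := aux3 _ lam kap h
    simpa using this
end

section
/- Let k be a commutative ring and R a k-algebra. Let P₁ and P₂ be extended Rota-Baxter operators on R of weights (λ₁, κ₁) and (λ₂, κ₂) respectively. Suppose there exist α₁₂, β₁₂, γ₁₂, α₂₁, β₂₁, γ₂₁ ∈ k such that for all u, v ∈ R and for each pair (i,j) ∈ {(1,2),(2,1)}: Pᵢ(u)Pⱼ(v) = Pᵢ(uPⱼ(v)) + Pⱼ(Pᵢ(u)v) + αᵢⱼ Pᵢ(uv) + βᵢⱼ Pⱼ(uv) + γᵢⱼ uv. If β₁₂ + α₂₁ = λ₁ and α₁₂ + β₂₁ = λ₂, then for all a, b ∈ k the operator Q := aP₁ + bP₂ is an extended Rota-Baxter operator of weight (aλ₁ + bλ₂, a²κ₁ + b²κ₂ + ab(γ₁₂ + γ₂₁)). -/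
/-- Linear combinations of compatible extended Rota-Baxter operators are extended
Rota-Baxter operators. -/
theorem stmt4 {k : Type*} [CommRing k] {R : Type*} [Ring R] [Algebra k R]
    (P1 P2 : R →ₗ[k] R) (lam1 kap1 lam2 kap2 : k)
    (α12 β12 γ12 α21 β21 γ21 : k)
    (h1 : IsExtRB lam1 kap1 P1) (h2 : IsExtRB lam2 kap2 P2)
    (h12 : ∀ u v : R, P1 u * P2 v =
      P1 (u * P2 v) + P2 (P1 u * v) + α12 • P1 (u * v) + β12 • P2 (u * v) + γ12 • (u * v))
    (h21 : ∀ u v : R, P2 u * P1 v =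
      P2 (u * P1 v) + P1 (P2 u * v) + α21 • P2 (u * v) + β21 • P1 (u * v) + γ21 • (u * v))
    (hc1 : β12 + α21 = lam1) (hc2 : α12 + β21 = lam2) (a b : k) :
    IsExtRB (a * lam1 + b * lam2)
      (a ^ 2 * kap1 + b ^ 2 * kap2 + a * b * (γ12 + γ21)) (a • P1 + b • P2) := by
  intro x y
  subst hc1 hc2
  simp only [LinearMap.add_apply, LinearMap.smul_apply, map_add, LinearMap.map_smul,
    add_mul, mul_add, smul_mul_assoc, mul_smul_comm, h1 x y, h2 x y, h12, h21]
  module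
end

section
/- Let k be a commutative ring, R a k-algebra, and let P be an extended Rota-Baxter operator of weight (λ, κ) on R. Let P̃ := -λ·id_R - P. Then for all a, b ∈ k, the operator Q := aP + bP̃ is an extended Rota-Baxter operator of weight (λ(a+b), abλ² + (a-b)²κ). -/
/-- If `P` is an extended Rota-Baxter operator of weight `(lam, kap)` and
`P̃ = -lam • id - P`, then `a • P + b • P̃` is an extended Rota-Baxter operator of weight
`(lam(a+b), ab·lam² + (a-b)²·kap)`. -/
theorem stmt6 {k : Type*} [CommRing k] {R : Type*} [Ring R] [Algebra k R]
    (P : R →ₗ[k] R) (lam kap : k) (h : IsExtRB lam kap P)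
    (Pt : R →ₗ[k] R) (hPt : Pt = -(lam • (LinearMap.id : R →ₗ[k] R)) - P) (a b : k) :
    IsExtRB (lam * (a + b)) (a * b * lam ^ 2 + (a - b) ^ 2 * kap) (a • P + b • Pt) := by
  subst hPt
  intro x y
  have hxy := h x y
  simp only [LinearMap.add_apply, LinearMap.smul_apply, LinearMap.sub_apply,
    LinearMap.neg_apply, LinearMap.id_apply, smul_sub, smul_neg, smul_smul,
    map_add, map_smul, map_sub, map_neg, mul_add, add_mul, mul_sub, sub_mul,
    mul_neg, neg_mul, smul_mul_assoc, mul_smul_comm, hxy]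
  module
end

section
/- Let k be a commutative ring, R a k-algebra, and let P be a Rota-Baxter operator of weight λ on R (that is, an extended Rota-Baxter operator of weight (λ, 0)). Let P̃ := -λ·id_R - P. Then for all a, b ∈ k, the operator Q := aP + bP̃ is an extended Rota-Baxter operator of weight (λ(a+b), abλ²). -/
/-- If `P` is a Rota-Baxter operator of weight `lam` and `P̃ = -lam • id - P`, then
`a • P + b • P̃` is an extended Rota-Baxter operator of weight `(lam(a+b), ab·lam²)`. -/
theorem stmt7 {k : Type*} [CommRing k] {R : Type*} [Ring R] [Algebra k R]
    (P : R →ₗ[k] R) (lam : k) (h : IsExtRB lam 0 P)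
    (Pt : R →ₗ[k] R) (hPt : Pt = -(lam • (LinearMap.id : R →ₗ[k] R)) - P) (a b : k) :
    IsExtRB (lam * (a + b)) (a * b * lam ^ 2) (a • P + b • Pt) := by
  intro x y
  have h0 := h x y
  simp only [zero_smul, add_zero] at h0
  simp only [hPt, LinearMap.add_apply, LinearMap.smul_apply, LinearMap.sub_apply,
    LinearMap.neg_apply, LinearMap.id_apply, map_add, map_smul, map_sub, map_neg,
    smul_mul_assoc, mul_smul_comm, mul_add, add_mul, mul_sub, sub_mul, mul_neg, neg_mul,
    smul_neg, smul_sub, smul_add, h0]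
  module
end

section
/- Let k be a commutative ring, R a k-algebra, and let P be a Rota-Baxter operator of weight λ on R (that is, an extended Rota-Baxter operator of weight (λ, 0)). Let P̃ := -λ·id_R - P. Let μ, κ ∈ k and suppose a, b ∈ k satisfy a + b = μ and ab = κ (i.e., a and b are the roots of t² - μt + κ). Then Q := aP + bP̃ is an extended Rota-Baxter operator of weight (μλ, κλ²). In particular, if λ = 1, then Q is an extended Rota-Baxter operator of weight (μ, κ). -/
/-- If `P` is a Rota-Baxter operator of weight `lam`, `P̃ = -lam • id - P`, and `a, b` are
the roots of `t² - μt + kap` (i.e. `a + b = μ` and `ab = kap`), then `Q = a • P + b • P̃` is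
an extended Rota-Baxter operator of weight `(μ·lam, kap·lam²)`; in particular of weight
`(μ, kap)` when `lam = 1`. -/
theorem stmt8 {k : Type*} [CommRing k] {R : Type*} [Ring R] [Algebra k R]
    (P : R →ₗ[k] R) (lam : k) (h : IsExtRB lam 0 P)
    (Pt : R →ₗ[k] R) (hPt : Pt = -(lam • (LinearMap.id : R →ₗ[k] R)) - P)
    (μ kap a b : k) (hsum : a + b = μ) (hprod : a * b = kap) :
    IsExtRB (μ * lam) (kap * lam ^ 2) (a • P + b • Pt) ∧
      (lam = 1 → IsExtRB μ kap (a • P + b • Pt)) := by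
  subst hPt hsum hprod
  have main : IsExtRB ((a + b) * lam) (a * b * lam ^ 2)
      (a • P + b • (-(lam • (LinearMap.id : R →ₗ[k] R)) - P)) := by
    intro x y
    have hxy := h x y
    simp only [zero_smul, add_zero] at hxy
    simp only [LinearMap.add_apply, LinearMap.smul_apply, LinearMap.sub_apply,
      LinearMap.neg_apply, LinearMap.id_apply, map_add, map_smul, map_sub, map_neg,
      smul_mul_assoc, mul_smul_comm, smul_smul, mul_add, add_mul, mul_sub, sub_mul,
      smul_add, smul_sub, smul_neg, neg_mul, mul_neg]
    rw [hxy]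
    module
  refine ⟨main, fun hl => ?_⟩
  subst hl
  simpa using main
end

section
/- Let a, b ∈ ℂ and let Q be the ℂ-linear operator on the field of formal Laurent series ℂ((t)) determined by: for every Laurent series f, the coefficient of tⁿ in Q(f) equals a times the coefficient of tⁿ in f when n ≥ 0, and equals b times the coefficient of tⁿ in f when n < 0 (i.e., Q = aP₊ + bP₋ where P₊ projects onto the part with nonnegative exponents and P₋ projects onto the part with negative exponents). Then Q is an extended Rota-Baxter operator of weight (-(a+b), ab) on ℂ((t)). -/
/-!
Let `q n` be `a` for `n ≥ 0` and `b` for `n < 0`, so that `Q` multiplies the `n`-th coefficient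
by `q n`. Comparing coefficients of `tⁱ⁺ʲ` term by term, the Rota-Baxter identity
reduces to `(q (i+j) - q i) * (q (i+j) - q j) = (q (i+j) - a) * (q (i+j) - b)` for all `i, j`.
Both sides vanish: the right one since `q (i+j) ∈ {a, b}`, the left one since `i + j` has the
sign of `i` or of `j`.
-/

open Finset

namespace HahnSeries

variable {Γ R : Type*} [PartialOrder Γ]

theorem support_subset_of_coeff_eq_mul [MulZeroClass R] {P : R⟦Γ⟧ → R⟦Γ⟧} {q : Γ → R}
    (hP : ∀ f n, (P f).coeff n = q n * f.coeff n) (f : R⟦Γ⟧) : (P f).support ⊆ f.support :=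
  fun n hn hf => hn (by rw [hP, hf, mul_zero])

variable [AddCommMonoid Γ] [IsOrderedCancelAddMonoid Γ]

theorem coeff_mul_of_support_subset [NonUnitalNonAssocSemiring R] {x y : R⟦Γ⟧} {s t : Set Γ}
    (hs : s.IsPWO) (ht : t.IsPWO) (hxs : x.support ⊆ s) (hyt : y.support ⊆ t) (n : Γ) :
    (x * y).coeff n = ∑ ij ∈ antidiagonal hs ht n, x.coeff ij.1 * y.coeff ij.2 := by
  rw [coeff_mul_left' hs hxs]
  refine sum_subset (antidiagonal_mono_right hyt) fun ij hst hy => ?_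
  obtain ⟨hi, -, hn⟩ := Finset.mem_antidiagonal.mp hst
  have hy0 : y.coeff ij.2 = 0 := by
    by_contra hy0
    exact hy (Finset.mem_antidiagonal.mpr ⟨hi, hy0, hn⟩)
  rw [hy0, mul_zero]

theorem coeff_rotaBaxter_of_coeff_eq_mul [CommSemiring R] {P : R⟦Γ⟧ → R⟦Γ⟧} {q : Γ → R}
    (hP : ∀ f n, (P f).coeff n = q n * f.coeff n) {lam kap : R}
    (hq : ∀ i j, q i * q j = q (i + j) * q j + q (i + j) * q i + lam * q (i + j) + kap)
    (x y : R⟦Γ⟧) (n : Γ) :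
    (P x * P y).coeff n = (P (x * P y)).coeff n + (P (P x * y)).coeff n
      + lam * (P (x * y)).coeff n + kap * (x * y).coeff n := by
  have hx := x.isPWO_support
  have hy := y.isPWO_support
  have hPx := support_subset_of_coeff_eq_mul hP x
  have hPy := support_subset_of_coeff_eq_mul hP y
  rw [hP (x * P y), hP (P x * y), hP (x * y), coeff_mul_of_support_subset hx hy hPx hPy,
    coeff_mul_of_support_subset hx hy le_rfl hPy, coeff_mul_of_support_subset hx hy hPx le_rfl,
    coeff_mul_of_support_subset hx hy le_rfl le_rfl]
  simp only [mul_sum, ← sum_add_distrib]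
  refine sum_congr rfl fun ⟨i, j⟩ hij => ?_
  obtain rfl : i + j = n := (Finset.mem_antidiagonal.mp hij).2.2
  simp only [hP]
  calc q i * x.coeff i * (q j * y.coeff j) = x.coeff i * y.coeff j * (q i * q j) := by ring
    _ = _ := by rw [hq]; ring

end HahnSeries

theorem LaurentSeries.coeff_algebraMap_mul {R : Type*} [CommSemiring R] (c : R)
    (f : LaurentSeries R) (n : ℤ) :
    (algebraMap R (LaurentSeries R) c * f).coeff n = c * f.coeff n := by
  rw [HahnSeries.algebraMap_apply', PowerSeries.algebraMap_apply, Algebra.algebraMap_self,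
    RingHom.id_apply, HahnSeries.ofPowerSeries_C, HahnSeries.C_mul_eq_smul,
    HahnSeries.coeff_smul, smul_eq_mul]

section SignWeight

variable {Γ R : Type*} [AddCommMonoid Γ] [LinearOrder Γ] [IsOrderedAddMonoid Γ] [CommRing R]

def signWeight (a b : R) (n : Γ) : R := if 0 ≤ n then a else b

theorem signWeight_mul_signWeight (a b : R) (i j : Γ) :
    signWeight a b i * signWeight a b j =
      signWeight a b (i + j) * signWeight a b j + signWeight a b (i + j) * signWeight a b i
        + -(a + b) * signWeight a b (i + j) + a * b := by
  by_cases hi : 0 ≤ i <;> by_cases hj : 0 ≤ j <;> by_cases hij : 0 ≤ i + j <;>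
    simp only [signWeight, hi, hj, hij, if_true, if_false] <;> first
    | exact absurd (add_nonneg hi hj) hij
    | exact absurd hij (not_le.mpr (add_neg_of_neg_of_nonpos (not_le.mp hi) (not_le.mp hj).le))
    | ring

end SignWeight

/-- The operator `Q = a·P₊ + b·P₋` on formal Laurent series over `ℂ`, which multiplies the
coefficients in nonnegative degrees by `a` and those in negative degrees by `b`, is an
extended Rota-Baxter operator of weight `(-(a+b), ab)`. -/
theorem stmt9 (a b : ℂ)
    (Q : @LinearMap ℂ ℂ _ _ (RingHom.id ℂ) (LaurentSeries ℂ) (LaurentSeries ℂ) _ _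
      Algebra.toModule Algebra.toModule)
    (hQ : ∀ (f : LaurentSeries ℂ) (n : ℤ),
      (Q f).coeff n = if 0 ≤ n then a * f.coeff n else b * f.coeff n) :
    IsExtRB (-(a + b)) (a * b) Q := by
  have hQ' (f : LaurentSeries ℂ) (n : ℤ) :
      (Q f).coeff n = signWeight a b n * f.coeff n :=
    (hQ f n).trans (ite_mul ..).symm
  intro f g
  ext n
  simp only [HahnSeries.coeff_add, Algebra.smul_def, LaurentSeries.coeff_algebraMap_mul]
  exact HahnSeries.coeff_rotaBaxter_of_coeff_eq_mul hQ' (signWeight_mul_signWeight a b) f g n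
end

section
/- Let K be a field of characteristic zero and let a, b ∈ K. For k ≥ 0 let t_k := x(x-1)⋯(x-k+1)/k! ∈ K[x] denote the divided falling factorials (so t_0 = 1), which form a K-basis of K[x]. Let Q : K[x] → K[x] be the unique K-linear map defined on this basis by Q(t_k) = t_k · ((a-b)x - ak - b)/(k+1) for all k ≥ 0. Then Q is an extended Rota-Baxter operator of weight (a+b, ab) on K[x]. -/
/-- The divided falling factorial `t_k = x(x-1)⋯(x-k+1)/k!`. -/
noncomputable def dividedFallingFactorial (K : Type*) [Field K] (n : ℕ) : Polynomial K :=
  (n.factorial : K)⁻¹ • descPochhammer K n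

namespace DFFaux

open Polynomial

variable {K : Type*} [Field K] [CharZero K]

lemma dff_zero : dividedFallingFactorial K 0 = 1 := by
  simp [dividedFallingFactorial]

lemma hn1 (n : ℕ) : ((n : K) + 1) ≠ 0 := by
  exact_mod_cast (Nat.cast_ne_zero (R := K)).mpr (Nat.succ_ne_zero n)

lemma fact_ne (n : ℕ) : ((n.factorial : K)) ≠ 0 := by
  exact_mod_cast Nat.cast_ne_zero.mpr n.factorial_ne_zero

/-- `(n+1) • t_{n+1} = t_n * (X - n)`. -/
lemma succ_smul (n : ℕ) :
    ((n : K) + 1) • dividedFallingFactorial K (n + 1) =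
      dividedFallingFactorial K n * (X - (n : Polynomial K)) := by
  unfold dividedFallingFactorial
  rw [descPochhammer_succ_right, smul_smul, ← smul_mul_assoc]
  congr 2
  have hfact : (((n + 1).factorial : K)) = ((n : K) + 1) * (n.factorial : K) := by
    push_cast [Nat.factorial_succ]; ring
  rw [hfact, mul_inv, ← mul_assoc, mul_inv_cancel₀ (hn1 n), one_mul]

/-- Difference identity: `taylor 1 t_{n+1} = t_{n+1} + t_n`. -/
lemma taylor_dff_succ (n : ℕ) :
    Polynomial.taylor (1 : K) (dividedFallingFactorial K (n + 1)) =
      dividedFallingFactorial K (n + 1) + dividedFallingFactorial K n := by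
  have h1 : Polynomial.taylor (1 : K) (descPochhammer K (n + 1)) =
      (X + C 1) * descPochhammer K n := by
    rw [descPochhammer_succ_left, taylor_apply, mul_comp, X_comp, comp_assoc, sub_comp,
      X_comp, one_comp]
    norm_num
  have h2 : (X + C 1) * descPochhammer K n =
      descPochhammer K (n + 1) + ((n : K) + 1) • descPochhammer K n := by
    rw [descPochhammer_succ_right, smul_eq_C_mul, map_add, map_one, C_eq_natCast]
    ring
  unfold dividedFallingFactorial
  rw [map_smul, h1, h2, smul_add, smul_smul]
  congr 1
  have hfact : (((n + 1).factorial : K)) = ((n : K) + 1) * (n.factorial : K) := by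
    push_cast [Nat.factorial_succ]; ring
  rw [hfact, mul_inv, mul_comm (((n : K) + 1))⁻¹, mul_assoc,
    inv_mul_cancel₀ (hn1 n), mul_one]

lemma dff_natDegree (n : ℕ) : (dividedFallingFactorial K n).natDegree = n := by
  unfold dividedFallingFactorial
  rw [smul_eq_C_mul, natDegree_C_mul (inv_ne_zero (fact_ne n)), descPochhammer_natDegree]

lemma dff_coeff_self (n : ℕ) :
    (dividedFallingFactorial K n).coeff n = (n.factorial : K)⁻¹ := by
  unfold dividedFallingFactorial
  rw [coeff_smul]
  have := (monic_descPochhammer K n).coeff_natDegree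
  rw [descPochhammer_natDegree] at this
  rw [this, smul_eq_mul, mul_one]

lemma dff_eval_zero_succ (n : ℕ) :
    (dividedFallingFactorial K (n + 1)).eval 0 = 0 := by
  unfold dividedFallingFactorial
  rw [eval_smul, descPochhammer_ne_zero_eval_zero (R := K) (Nat.succ_ne_zero n), smul_zero]

lemma span_aux (n : ℕ) : ∀ f : Polynomial K, f.natDegree ≤ n →
    f ∈ Submodule.span K (Set.range (dividedFallingFactorial K)) := by
  induction n with
  | zero =>
    intro f hf
    rw [Polynomial.eq_C_of_natDegree_le_zero hf]
    have : Polynomial.C (f.coeff 0) = f.coeff 0 • dividedFallingFactorial K 0 := by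
      rw [dff_zero, smul_eq_C_mul, mul_one]
    rw [this]
    exact Submodule.smul_mem _ _ (Submodule.subset_span ⟨0, rfl⟩)
  | succ n ih =>
    intro f hf
    set c := f.coeff (n + 1) with hc
    set s := (c * ((n + 1).factorial : K)) • dividedFallingFactorial K (n + 1) with hs
    have hg : (f - s).natDegree ≤ n := by
      rw [natDegree_le_iff_coeff_eq_zero]
      intro m hm
      rcases eq_or_lt_of_le (Nat.succ_le_of_lt hm) with h | h
      · rw [coeff_sub, hs, coeff_smul, ← h, dff_coeff_self, smul_eq_mul, mul_assoc,
          mul_inv_cancel₀ (fact_ne (n + 1)), mul_one, ← hc, sub_self]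
      · rw [coeff_sub, coeff_eq_zero_of_natDegree_lt (lt_of_le_of_lt hf h), hs, coeff_smul,
          coeff_eq_zero_of_natDegree_lt (by rw [dff_natDegree]; exact h), smul_zero, sub_self]
    have h1 : f = (f - s) + s := by ring
    rw [h1]
    exact Submodule.add_mem _ (ih _ hg)
      (Submodule.smul_mem _ _ (Submodule.subset_span ⟨n + 1, rfl⟩))

lemma span_top :
    Submodule.span K (Set.range (dividedFallingFactorial K)) = ⊤ :=
  Submodule.eq_top_iff'.mpr fun f => span_aux f.natDegree f le_rfl

lemma eq_zero_of_fix (p : Polynomial K) (h1 : Polynomial.taylor (1 : K) p = p)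
    (h0 : p.eval 0 = 0) : p = 0 := by
  have key : ∀ n : ℕ, p.eval (n : K) = 0 := by
    intro n
    induction n with
    | zero => simpa using h0
    | succ n ihn =>
      have := taylor_eval (1 : K) p (n : K)
      rw [h1, ihn] at this
      push_cast
      rw [← this]
  by_contra hp
  exact (Set.infinite_of_injective_forall_mem (f := fun n : ℕ => (n : K))
    Nat.cast_injective (fun n => key n)) (Polynomial.finite_setOf_isRoot hp)

end DFFaux

open Polynomial DFFaux in
/-- The linear operator `Q` on `K[x]` determined on the basis of divided falling factorials
by `Q(t_k) = t_k · ((a-b)x - ak - b)/(k+1)` is an extended Rota-Baxter operator of weight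
`(a + b, ab)`. -/
theorem stmt10 {K : Type*} [Field K] [CharZero K] (a b : K)
    (Q : Polynomial K →ₗ[K] Polynomial K)
    (hQ : ∀ n : ℕ, Q (dividedFallingFactorial K n) =
      ((n : K) + 1)⁻¹ • (dividedFallingFactorial K n *
        (Polynomial.C (a - b) * Polynomial.X - Polynomial.C (a * n + b)))) :
    IsExtRB (a + b) (a * b) Q := by
  -- Q on the basis: Q t_n = (a - b) • t_{n+1} - b • t_n
  have hQ' : ∀ n : ℕ, Q (dividedFallingFactorial K n) =
      (a - b) • dividedFallingFactorial K (n + 1) - b • dividedFallingFactorial K n := by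
    intro n
    rw [hQ n]
    rw [inv_smul_eq_iff₀ (hn1 (K := K) n), smul_sub, smul_smul, smul_smul, mul_comm ((n:K)+1) (a-b),
      ← smul_smul, succ_smul]
    simp only [smul_eq_C_mul, ← C_eq_natCast, map_add, map_sub, map_mul, map_one, C_1]
    ring
  -- The shift relation for Q
  have hTQ : ∀ h : Polynomial K, Polynomial.taylor (1 : K) (Q h) =
      Q h + a • h - b • Polynomial.taylor (1 : K) h := by
    have heq : (Polynomial.taylor (1 : K)) ∘ₗ Q =
        Q + a • LinearMap.id - b • (Polynomial.taylor (1 : K)) := by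
      apply LinearMap.ext_on (span_top (K := K))
      rintro x ⟨n, rfl⟩
      simp only [LinearMap.comp_apply, LinearMap.sub_apply, LinearMap.add_apply,
        LinearMap.smul_apply, LinearMap.id_apply, hQ' n, map_sub, map_smul, taylor_dff_succ]
      module
    intro h
    have := LinearMap.congr_fun heq h
    simpa using this
  -- Evaluation at zero
  have hE : ∀ h : Polynomial K, (Q h).eval 0 = -b * h.eval 0 := by
    have heq : (Polynomial.leval (0 : K)) ∘ₗ Q = (-b) • Polynomial.leval (0 : K) := by
      apply LinearMap.ext_on (span_top (K := K))
      rintro x ⟨n, rfl⟩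
      simp only [LinearMap.comp_apply, LinearMap.smul_apply, Polynomial.leval_apply, hQ' n,
        eval_sub, eval_smul, dff_eval_zero_succ, smul_zero, smul_eq_mul]
      ring
    intro h
    have := LinearMap.congr_fun heq h
    simpa [Polynomial.leval_apply] using this
  intro f g
  set p : Polynomial K := Q f * Q g - (Q (f * Q g) + Q (Q f * g) + (a + b) • Q (f * g) +
      (a * b) • (f * g)) with hp
  have h1 : Polynomial.taylor (1 : K) p = p := by
    simp only [hp, map_sub, map_add, map_smul, taylor_mul, hTQ]
    simp only [smul_eq_C_mul, map_add, map_mul, map_sub]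
    ring
  have h0 : p.eval 0 = 0 := by
    simp only [hp, eval_sub, eval_add, eval_mul, eval_smul, hE, smul_eq_mul]
    ring
  have := eq_zero_of_fix p h1 h0
  rw [hp, sub_eq_zero] at this
  exact this
end

section
/- Let k be a commutative ring and λ, κ ∈ k. Let M = ⊕_{n≥0} k·e_n be the free k-module with basis (e_n)_{n≥0} (e.g. M = ℕ →₀ k with e_n the standard basis), and let S : M → M be the k-linear shift map S(e_n) = e_{n+1}. Suppose ⋄ : M × M → M is a k-bilinear operation satisfying e_0 ⋄ e_n = e_n = e_n ⋄ e_0 for all n ≥ 0, and the recursion e_m ⋄ e_n = S(e_{m-1} ⋄ e_n) + S(e_m ⋄ e_{n-1}) + λ S(e_{m-1} ⋄ e_{n-1}) + κ (e_{m-1} ⋄ e_{n-1}) for all m, n ≥ 1. Then for all m, n ≥ 0: e_m ⋄ e_n = ∑_{r=0}^{min(m,n)} ∑_{i=0}^{r} C(m+n-r, m)·C(m, r)·C(r, i)·λ^{r-i}·κ^{i}·e_{m+n-r-i}, where C(·,·) denotes the binomial coefficient. -/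
/-!
Let `S` act as multiplication by `X`, so that `ℕ →₀ k` is a `k[X]`-module with `e_n = X ^ n • e_0`.
The recursion for `e_m ⋄ e_n` is then the last-step recursion for lattice paths from `(0,0)` to
`(m,n)` with steps `(1,0)`, `(0,1)`, `(1,1)`, weighted by `X`, `X` and `λX + κ` respectively.
Hence `e_m ⋄ e_n = P(m,n) • e_0` for the weighted path count
`P(m,n) = ∑_r C(m+n-r, m) C(m, r) X^(m+n-2r) (λX + κ)^r`, where `r` counts diagonal steps, and
expanding `(λX + κ)^r` by the binomial theorem gives the formula.
-/

open Finset Polynomial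

def delannoyCoeff (m n r : ℕ) : ℕ := (m + n - r).choose m * m.choose r

lemma delannoyCoeff_eq_zero_of_lt_left {m n r : ℕ} (h : m < r) : delannoyCoeff m n r = 0 := by
  simp [delannoyCoeff, Nat.choose_eq_zero_of_lt h]

lemma delannoyCoeff_eq_zero_of_lt_right {m n r : ℕ} (h : n < r) : delannoyCoeff m n r = 0 := by
  rcases lt_or_ge m r with hm | hm
  · exact delannoyCoeff_eq_zero_of_lt_left hm
  · simp [delannoyCoeff, Nat.choose_eq_zero_of_lt (show m + n - r < m by omega)]

lemma delannoyCoeff_eq_zero_of_lt_two_mul {m n r : ℕ} (h : m + n < 2 * r) :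
    delannoyCoeff m n r = 0 := by
  rcases lt_or_ge m r with hm | hm
  · exact delannoyCoeff_eq_zero_of_lt_left hm
  · exact delannoyCoeff_eq_zero_of_lt_right (by omega)

lemma delannoyCoeff_succ_succ_zero (m n : ℕ) :
    delannoyCoeff (m + 1) (n + 1) 0 = delannoyCoeff m (n + 1) 0 + delannoyCoeff (m + 1) n 0 := by
  simp only [delannoyCoeff, Nat.choose_zero_right, mul_one, Nat.sub_zero]
  rw [show m + 1 + (n + 1) = m + n + 1 + 1 by omega, Nat.choose_succ_succ',
    show m + (n + 1) = m + n + 1 by omega, show m + 1 + n = m + n + 1 by omega]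

lemma delannoyCoeff_succ_succ_succ (m n r : ℕ) :
    delannoyCoeff (m + 1) (n + 1) (r + 1)
      = delannoyCoeff m (n + 1) (r + 1) + delannoyCoeff (m + 1) n (r + 1)
        + delannoyCoeff m n r := by
  rcases lt_or_ge m r with hm | hm
  · simp only [delannoyCoeff_eq_zero_of_lt_left (show m + 1 < r + 1 by omega),
      delannoyCoeff_eq_zero_of_lt_left (show m < r + 1 by omega),
      delannoyCoeff_eq_zero_of_lt_left hm]
  simp only [delannoyCoeff]
  rw [show m + 1 + (n + 1) - (r + 1) = m + n - r + 1 by omega,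
    show m + (n + 1) - (r + 1) = m + n - r by omega,
    show m + 1 + n - (r + 1) = m + n - r by omega,
    Nat.choose_succ_succ', Nat.choose_succ_succ' m r]
  ring

section DelannoyPoly

variable {R : Type*} [CommSemiring R] (x q : R)

def delannoyTerm (m n r : ℕ) : R := (delannoyCoeff m n r : R) * x ^ (m + n - 2 * r) * q ^ r

def delannoyPoly (m n : ℕ) : R := ∑ r ∈ range (min m n + 1), delannoyTerm x q m n r

lemma delannoyPoly_eq_sum_range {m n N : ℕ} (h : min m n < N) :
    delannoyPoly x q m n = ∑ r ∈ range N, delannoyTerm x q m n r := by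
  refine sum_subset (range_subset_range.2 h) fun r _ hr => ?_
  rw [mem_range, not_lt, Nat.succ_le_iff, min_lt_iff] at hr
  rcases hr with hr | hr
  · simp [delannoyTerm, delannoyCoeff_eq_zero_of_lt_left hr]
  · simp [delannoyTerm, delannoyCoeff_eq_zero_of_lt_right hr]

@[simp]
lemma delannoyPoly_zero_left (n : ℕ) : delannoyPoly x q 0 n = x ^ n := by
  simp [delannoyPoly, delannoyTerm, delannoyCoeff]

@[simp]
lemma delannoyPoly_zero_right (m : ℕ) : delannoyPoly x q m 0 = x ^ m := by
  simp [delannoyPoly, delannoyTerm, delannoyCoeff]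

lemma mul_delannoyTerm (m n r : ℕ) :
    x * delannoyTerm x q m n r = (delannoyCoeff m n r : R) * x ^ (m + n + 1 - 2 * r) * q ^ r := by
  rcases lt_or_ge (m + n) (2 * r) with h | h
  · simp [delannoyTerm, delannoyCoeff_eq_zero_of_lt_two_mul h]
  · rw [delannoyTerm, show m + n + 1 - 2 * r = m + n - 2 * r + 1 by omega, pow_succ]
    ring

lemma delannoyTerm_succ_succ_zero (m n : ℕ) :
    delannoyTerm x q (m + 1) (n + 1) 0
      = x * delannoyTerm x q m (n + 1) 0 + x * delannoyTerm x q (m + 1) n 0 := by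
  rw [mul_delannoyTerm, mul_delannoyTerm, delannoyTerm, delannoyCoeff_succ_succ_zero,
    show m + (n + 1) + 1 = m + 1 + (n + 1) by omega, show m + 1 + n + 1 = m + 1 + (n + 1) by omega]
  push_cast
  ring

lemma delannoyTerm_succ_succ_succ (m n r : ℕ) :
    delannoyTerm x q (m + 1) (n + 1) (r + 1)
      = x * delannoyTerm x q m (n + 1) (r + 1) + x * delannoyTerm x q (m + 1) n (r + 1)
        + q * delannoyTerm x q m n r := by
  rw [mul_delannoyTerm, mul_delannoyTerm, delannoyTerm, delannoyTerm,
    delannoyCoeff_succ_succ_succ,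
    show m + (n + 1) + 1 - 2 * (r + 1) = m + n - 2 * r by omega,
    show m + 1 + n + 1 - 2 * (r + 1) = m + n - 2 * r by omega,
    show m + 1 + (n + 1) - 2 * (r + 1) = m + n - 2 * r by omega]
  push_cast
  ring

lemma delannoyPoly_succ_succ (m n : ℕ) :
    delannoyPoly x q (m + 1) (n + 1)
      = x * delannoyPoly x q m (n + 1) + x * delannoyPoly x q (m + 1) n
        + q * delannoyPoly x q m n := by
  rw [delannoyPoly_eq_sum_range x q (N := m + 2) (by omega),
    delannoyPoly_eq_sum_range x q (m := m) (n := n + 1) (N := m + 2) (by omega),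
    delannoyPoly_eq_sum_range x q (m := m + 1) (n := n) (N := m + 2) (by omega),
    delannoyPoly_eq_sum_range x q (m := m) (n := n) (N := m + 1) (by omega),
    sum_range_succ', sum_range_succ' _ (m + 1), sum_range_succ' _ (m + 1),
    sum_congr rfl fun r _ => delannoyTerm_succ_succ_succ x q m n r,
    delannoyTerm_succ_succ_zero, sum_add_distrib, sum_add_distrib, mul_add, mul_add, mul_sum,
    mul_sum, mul_sum]
  abel

lemma delannoyPoly_mul_add (a b : R) (m n : ℕ) :
    delannoyPoly x (a * x + b) m n
      = ∑ r ∈ range (min m n + 1), ∑ i ∈ range (r + 1),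
          ((m + n - r).choose m * m.choose r * r.choose i * a ^ (r - i) * b ^ i : R)
            * x ^ (m + n - r - i) := by
  refine sum_congr rfl fun r hr => ?_
  have hr : 2 * r ≤ m + n := by rw [mem_range] at hr; omega
  rw [delannoyTerm, add_comm (a * x) b, add_pow, mul_sum]
  refine sum_congr rfl fun i hi => ?_
  have hi : i ≤ r := by rw [mem_range] at hi; omega
  rw [show m + n - r - i = (m + n - 2 * r) + (r - i) by omega, delannoyCoeff]
  push_cast
  ring

end DelannoyPoly

section Shift

variable {k : Type*} [CommRing k] {S : (ℕ →₀ k) →ₗ[k] (ℕ →₀ k)}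

lemma aeval_X_pow_apply_single_zero
    (hS : ∀ n : ℕ, S (Finsupp.single n 1) = Finsupp.single (n + 1) 1) (n : ℕ) :
    aeval S (X ^ n : k[X]) (Finsupp.single 0 1) = Finsupp.single n 1 := by
  induction n with
  | zero => simp
  | succ n ih => rw [pow_succ', map_mul, Module.End.mul_apply, ih, aeval_X, hS]

lemma aeval_C_mul_X_pow_apply_single_zero
    (hS : ∀ n : ℕ, S (Finsupp.single n 1) = Finsupp.single (n + 1) 1) (c : k) (n : ℕ) :
    aeval S (C c * X ^ n) (Finsupp.single 0 1) = c • Finsupp.single n 1 := by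
  rw [← smul_eq_C_mul, map_smul, LinearMap.smul_apply, aeval_X_pow_apply_single_zero hS]

lemma apply_single_eq_aeval_delannoyPoly (lam kap : k)
    (hS : ∀ n : ℕ, S (Finsupp.single n 1) = Finsupp.single (n + 1) 1)
    (D : (ℕ →₀ k) →ₗ[k] (ℕ →₀ k) →ₗ[k] (ℕ →₀ k))
    (h0l : ∀ n : ℕ, D (Finsupp.single 0 1) (Finsupp.single n 1) = Finsupp.single n 1)
    (h0r : ∀ n : ℕ, D (Finsupp.single n 1) (Finsupp.single 0 1) = Finsupp.single n 1)
    (hrec : ∀ m n : ℕ, D (Finsupp.single (m + 1) 1) (Finsupp.single (n + 1) 1)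
        = S (D (Finsupp.single m 1) (Finsupp.single (n + 1) 1))
          + S (D (Finsupp.single (m + 1) 1) (Finsupp.single n 1))
          + lam • S (D (Finsupp.single m 1) (Finsupp.single n 1))
          + kap • D (Finsupp.single m 1) (Finsupp.single n 1)) (m n : ℕ) :
    D (Finsupp.single m 1) (Finsupp.single n 1)
      = aeval S (delannoyPoly X (C lam * X + C kap) m n) (Finsupp.single 0 1) := by
  induction m generalizing n with
  | zero => rw [h0l, delannoyPoly_zero_left, aeval_X_pow_apply_single_zero hS]
  | succ m ihm =>
    induction n with
    | zero => rw [h0r, delannoyPoly_zero_right, aeval_X_pow_apply_single_zero hS]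
    | succ n ihn =>
      rw [hrec, ihm, ihm, ihn, delannoyPoly_succ_succ]
      simp only [add_mul, map_add, map_mul, aeval_X, aeval_C, LinearMap.add_apply,
        Module.End.mul_apply, Module.algebraMap_end_apply]
      abel

end Shift

/-- The product determined by the generalized quasi-shuffle recursion on the free module
`⊕_{n≥0} k e_n` has the explicit formula
`e_m ⋄ e_n = ∑_{r=0}^{min(m,n)} ∑_{i=0}^{r} C(m+n-r,m) C(m,r) C(r,i) lam^{r-i} kap^i e_{m+n-r-i}`. -/
theorem stmt11 {k : Type*} [CommRing k] (lam kap : k)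
    (S : (ℕ →₀ k) →ₗ[k] (ℕ →₀ k))
    (hS : ∀ n : ℕ, S (Finsupp.single n 1) = Finsupp.single (n + 1) 1)
    (D : (ℕ →₀ k) →ₗ[k] (ℕ →₀ k) →ₗ[k] (ℕ →₀ k))
    (h0l : ∀ n : ℕ, D (Finsupp.single 0 1) (Finsupp.single n 1) = Finsupp.single n 1)
    (h0r : ∀ n : ℕ, D (Finsupp.single n 1) (Finsupp.single 0 1) = Finsupp.single n 1)
    (hrec : ∀ m n : ℕ, D (Finsupp.single (m + 1) 1) (Finsupp.single (n + 1) 1)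
        = S (D (Finsupp.single m 1) (Finsupp.single (n + 1) 1))
          + S (D (Finsupp.single (m + 1) 1) (Finsupp.single n 1))
          + lam • S (D (Finsupp.single m 1) (Finsupp.single n 1))
          + kap • D (Finsupp.single m 1) (Finsupp.single n 1)) :
    ∀ m n : ℕ, D (Finsupp.single m 1) (Finsupp.single n 1)
      = ∑ r ∈ Finset.range (min m n + 1), ∑ i ∈ Finset.range (r + 1),
          (((m + n - r).choose m : k) * (m.choose r : k) * (r.choose i : k)
            * lam ^ (r - i) * kap ^ i) • Finsupp.single (m + n - r - i) (1 : k) := by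
  intro m n
  rw [apply_single_eq_aeval_delannoyPoly lam kap hS D h0l h0r hrec, delannoyPoly_mul_add]
  simp only [map_sum, LinearMap.sum_apply, ← map_natCast C, ← C_pow, ← C_mul,
    aeval_C_mul_X_pow_apply_single_zero hS]
end

section
/- Let k be a commutative ring, R a commutative unital k-algebra, and λ, κ, μ ∈ k with μ² - λμ + κ = 0. Let P be an extended Rota-Baxter operator of weight (λ, κ) on R, and let ε : R → k be a k-algebra homomorphism satisfying ε(P(x)) = -μ·ε(x) for all x ∈ R. Define the k-linear operator P̄ on the tensor product algebra R ⊗_k R by P̄(a ⊗ b) := P(a) ⊗ ε(b)1_R + μ·a ⊗ ε(b)1_R + a ⊗ P(b). Then P̄ is an extended Rota-Baxter operator of weight (λ, κ) on R ⊗_k R. -/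
open TensorProduct

/-- If `P` is an extended Rota-Baxter operator of weight `(lam, kap)` on a commutative
algebra `R`, `μ` is a root of `t² - lam·t + kap`, and `ε : R → k` is an algebra map with
`ε ∘ P = -μ·ε`, then `P̄(a ⊗ b) = P a ⊗ ε(b)1 + μ·a ⊗ ε(b)1 + a ⊗ P b` is an extended
Rota-Baxter operator of weight `(lam, kap)` on `R ⊗[k] R`. -/
theorem stmt15 {k : Type*} [CommRing k] {R : Type*} [CommRing R] [Algebra k R]
    (lam kap μ : k) (hμ : μ ^ 2 - lam * μ + kap = 0)
    (P : R →ₗ[k] R) (hP : IsExtRB lam kap P)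
    (ε : R →ₐ[k] k) (hε : ∀ x : R, ε (P x) = -μ * ε x) :
    IsExtRB lam kap
      (TensorProduct.map P ((Algebra.linearMap k R).comp ε.toLinearMap)
        + μ • TensorProduct.map (LinearMap.id : R →ₗ[k] R)
            ((Algebra.linearMap k R).comp ε.toLinearMap)
        + TensorProduct.map (LinearMap.id : R →ₗ[k] R) P) := by
  set Q := (TensorProduct.map P ((Algebra.linearMap k R).comp ε.toLinearMap)
        + μ • TensorProduct.map (LinearMap.id : R →ₗ[k] R)
            ((Algebra.linearMap k R).comp ε.toLinearMap)
        + TensorProduct.map (LinearMap.id : R →ₗ[k] R) P) with hQ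
  intro x y
  induction x using TensorProduct.induction_on with
  | zero => simp
  | add x₁ x₂ h₁ h₂ =>
    simp only [add_mul, mul_add, map_add, smul_add] at h₁ h₂ ⊢
    rw [h₁, h₂]; abel
  | tmul a b =>
    induction y using TensorProduct.induction_on with
    | zero => simp
    | add y₁ y₂ h₁ h₂ =>
      simp only [add_mul, mul_add, map_add, smul_add] at h₁ h₂ ⊢
      rw [h₁, h₂]; abel
    | tmul c d =>
      simp only [hQ, LinearMap.add_apply, LinearMap.smul_apply, TensorProduct.map_tmul,
        LinearMap.comp_apply, AlgHom.toLinearMap_apply, Algebra.linearMap_apply,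
        LinearMap.id_coe, id_eq, Algebra.TensorProduct.tmul_mul_tmul,
        Algebra.algebraMap_eq_smul_one, smul_mul_assoc, mul_smul_comm, one_mul, mul_one,
        tmul_smul, smul_tmul', map_add, map_smul, map_mul, hε, smul_smul, mul_add, add_mul]
      rw [hP a c, hP b d]
      simp only [add_tmul, tmul_add, smul_tmul', tmul_smul, smul_smul, smul_add, add_tmul]
      simp only [← TensorProduct.smul_tmul', smul_smul]
      match_scalars
      any_goals ring1
      linear_combination (ε b * ε d) * hμ
end

section
/- Let k be a commutative ring, R a commutative unital k-algebra, and λ, κ, μ ∈ k with μ² - λμ + κ = 0. Let P be an extended Rota-Baxter operator of weight (λ, κ) on R, and let ε : R → k be a k-algebra homomorphism satisfying ε(P(x)) = -μ·ε(x) for all x ∈ R. Define the k-linear operator P̃ on the triple tensor product algebra R ⊗_k R ⊗_k R by P̃(a ⊗ b ⊗ c) := (P(a) + μa) ⊗ ε(b)1_R ⊗ ε(c)1_R + a ⊗ (P(b) + μb) ⊗ ε(c)1_R + a ⊗ b ⊗ P(c). Then P̃ is an extended Rota-Baxter operator of weight (λ, κ) on R ⊗_k R ⊗_k R. -/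
open TensorProduct

set_option maxHeartbeats 4000000 in
/-- If `P` is an extended Rota-Baxter operator of weight `(lam, kap)` on a commutative
algebra `R`, `μ` is a root of `t² - lam·t + kap`, and `ε : R → k` is an algebra map with
`ε ∘ P = -μ·ε`, then
`P̃(a ⊗ b ⊗ c) = (P a + μa) ⊗ ε(b)1 ⊗ ε(c)1 + a ⊗ (P b + μb) ⊗ ε(c)1 + a ⊗ b ⊗ P c` is an
extended Rota-Baxter operator of weight `(lam, kap)` on `R ⊗[k] R ⊗[k] R`. -/
theorem stmt16 {k : Type*} [CommRing k] {R : Type*} [CommRing R] [Algebra k R]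
    (lam kap μ : k) (hμ : μ ^ 2 - lam * μ + kap = 0)
    (P : R →ₗ[k] R) (hP : IsExtRB lam kap P)
    (ε : R →ₐ[k] k) (hε : ∀ x : R, ε (P x) = -μ * ε x) :
    IsExtRB lam kap
      (TensorProduct.map (P + μ • (LinearMap.id : R →ₗ[k] R))
          (TensorProduct.map ((Algebra.linearMap k R).comp ε.toLinearMap)
            ((Algebra.linearMap k R).comp ε.toLinearMap))
        + TensorProduct.map (LinearMap.id : R →ₗ[k] R)
            (TensorProduct.map (P + μ • (LinearMap.id : R →ₗ[k] R))
              ((Algebra.linearMap k R).comp ε.toLinearMap))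
        + TensorProduct.map (LinearMap.id : R →ₗ[k] R)
            (TensorProduct.map (LinearMap.id : R →ₗ[k] R) P)) := by
  set T := (TensorProduct.map (P + μ • (LinearMap.id : R →ₗ[k] R))
          (TensorProduct.map ((Algebra.linearMap k R).comp ε.toLinearMap)
            ((Algebra.linearMap k R).comp ε.toLinearMap))
        + TensorProduct.map (LinearMap.id : R →ₗ[k] R)
            (TensorProduct.map (P + μ • (LinearMap.id : R →ₗ[k] R))
              ((Algebra.linearMap k R).comp ε.toLinearMap))
        + TensorProduct.map (LinearMap.id : R →ₗ[k] R)
            (TensorProduct.map (LinearMap.id : R →ₗ[k] R) P)) with hT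
  intro x y
  induction x using TensorProduct.induction_on with
  | zero => simp
  | add u v hu hv =>
    simp only [map_add, add_mul, mul_add, smul_add] at *
    rw [hu, hv]; module
  | tmul a s =>
    induction s using TensorProduct.induction_on with
    | zero => simp
    | add u v hu hv =>
      simp only [tmul_add, map_add, add_mul, mul_add, smul_add] at *
      rw [hu, hv]; module
    | tmul b c =>
      induction y using TensorProduct.induction_on with
      | zero => simp
      | add u v hu hv =>
        simp only [map_add, add_mul, mul_add, smul_add] at *
        rw [hu, hv]; module
      | tmul a' s' =>
        induction s' using TensorProduct.induction_on with
        | zero => simp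
        | add u v hu hv =>
          simp only [tmul_add, map_add, add_mul, mul_add, smul_add] at *
          rw [hu, hv]; module
        | tmul b' c' =>
          simp only [hT, LinearMap.add_apply, TensorProduct.map_tmul, LinearMap.smul_apply,
            LinearMap.id_coe, id_eq, LinearMap.coe_comp, Function.comp_apply,
            AlgHom.toLinearMap_apply, Algebra.linearMap_apply,
            Algebra.TensorProduct.tmul_mul_tmul, mul_add, add_mul, tmul_add, add_tmul,
            map_add, smul_add, Algebra.algebraMap_eq_smul_one, smul_mul_assoc,
            mul_smul_comm, map_smul, smul_tmul', tmul_smul, map_mul, mul_one, one_mul,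
            hε, smul_smul]
          rw [hP a a', hP b b', hP c c']
          have hk : kap = lam * μ - μ ^ 2 := by linear_combination hμ
          simp only [hk, smul_add, add_tmul, tmul_add, ← smul_tmul', tmul_smul, smul_smul,
            map_add, map_smul, mul_add, add_mul]
          module
end

section
/- Let k be a commutative ring, let A and B be commutative k-algebras, and let Q be an extended Rota-Baxter operator of weight (λ, κ) on B. Then the k-linear operator id_A ⊗ Q on the tensor product algebra A ⊗_k B is an extended Rota-Baxter operator of weight (λ, κ); likewise, if Q is an extended Rota-Baxter operator of weight (λ, κ) on A, then Q ⊗ id_B is an extended Rota-Baxter operator of weight (λ, κ) on A ⊗_k B. -/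
open TensorProduct

private lemma extRB_of_tmul {k : Type*} [CommRing k] {A B : Type*} [CommRing A] [CommRing B]
    [Algebra k A] [Algebra k B] (lam kap : k) (P : (A ⊗[k] B) →ₗ[k] A ⊗[k] B)
    (h : ∀ (a c : A) (b d : B), P (a ⊗ₜ b) * P (c ⊗ₜ d) =
      P ((a ⊗ₜ b) * P (c ⊗ₜ d)) + P (P (a ⊗ₜ b) * (c ⊗ₜ d))
        + lam • P ((a ⊗ₜ b) * (c ⊗ₜ d)) + kap • ((a ⊗ₜ[k] b) * (c ⊗ₜ d))) :
    IsExtRB lam kap P := by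
  intro x y
  induction x using TensorProduct.induction_on with
  | zero => simp
  | tmul a b =>
    induction y using TensorProduct.induction_on with
    | zero => simp
    | tmul c d => exact h a c b d
    | add u v hu hv =>
      simp only [map_add, mul_add, add_mul, smul_add, hu, hv]
      abel
  | add u v hu hv =>
    simp only [map_add, mul_add, add_mul, smul_add, hu, hv]
    abel

/-- If `Q` is an extended Rota-Baxter operator of weight `(lam, kap)` on `B`, then
`id ⊗ Q` is one on `A ⊗[k] B`; likewise `Q ⊗ id` for an extended Rota-Baxter operator on
`A`. -/
theorem stmt17 {k : Type*} [CommRing k] {A B : Type*} [CommRing A] [CommRing B]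
    [Algebra k A] [Algebra k B] (lam kap : k) (QA : A →ₗ[k] A) (QB : B →ₗ[k] B) :
    (IsExtRB lam kap QB → IsExtRB lam kap (LinearMap.lTensor A QB)) ∧
    (IsExtRB lam kap QA → IsExtRB lam kap (LinearMap.rTensor B QA)) := by
  constructor
  · intro hQ
    apply extRB_of_tmul
    intro a c b d
    simp only [LinearMap.lTensor_tmul, Algebra.TensorProduct.tmul_mul_tmul,
      hQ b d, tmul_add, tmul_smul]
  · intro hQ
    apply extRB_of_tmul
    intro a c b d
    simp only [LinearMap.rTensor_tmul, Algebra.TensorProduct.tmul_mul_tmul,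
      hQ a c, add_tmul, smul_tmul']
end
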